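/- arXiv:1602.00141 — 3 statements merged into one kernel-verified Lean document; each statement's English description precedes it below -/
import Mathlib

section
/- Let d ≥ 2 be an integer, let α > d be a real number and let C₀ > 0. Then there exists C > 0 with the following property: for every h ∈ (0,1), every sequence (z_n)_{n≥1} of complex numbers of modulus 1 such that for every real L ≥ 1 the set {n : |z_n − 1| ≥ e^{−L/h}} has cardinality at most C₀ (L/h)^{d−1}, and every continuous function f on the unit circle {z ∈ ℂ : |z| = 1} with f(1) = 0 and M := sup_{|z|=1, z≠1} |log|z−1||^α |f(z)| < ∞, the series Σ_{n≥1} |f(z_n)| converges and (2πh)^{d−1} Σ_{n≥1} |f(z_n)| ≤ C (sup_{|z|=1} |f(z)| + M). -/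
/-!
Sort the points `z_n ≠ 1` into layers by the size of `|z_n - 1|`. On the layer
`e^{-(k+1)/h} ≤ |z_n - 1| < e^{-k/h}` (`k ≥ 1`) one has `|log |z_n - 1|| > k/h`, hence
`|f(z_n)| ≤ M (h/k)^α`, and the counting hypothesis at `L = k + 1` bounds the number of its points
by `C₀ ((k+1)/h)^{d-1}`; the outermost layer `k = 0` is estimated by `sup |f|` instead. After
multiplying by `h^{d-1}` the powers of `h` cancel (or leave `h^α ≤ 1`), and what remains is the
series `∑ (k+2)^{d-1} / (k+1)^α`, which converges because `α > d`.
-/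

open Real Complex

theorem summable_add_two_pow_div_add_one_rpow {m : ℕ} {α : ℝ} (hα : (m : ℝ) + 1 < α) :
    Summable fun k : ℕ => ((k : ℝ) + 2) ^ m / ((k : ℝ) + 1) ^ α := by
  have hshift : Summable fun k : ℕ => ((k : ℝ) + 1) ^ ((m : ℝ) - α) := by
    have hp : (m : ℝ) - α < -1 := by linarith
    simpa using (summable_nat_add_iff 1).mpr (Real.summable_nat_rpow.mpr hp)
  refine hshift.mul_left (2 ^ m) |>.of_nonneg_of_le (fun k => by positivity) fun k => ?_
  calc ((k : ℝ) + 2) ^ m / ((k : ℝ) + 1) ^ α ≤ (2 * ((k : ℝ) + 1)) ^ m / ((k : ℝ) + 1) ^ α := by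
        gcongr; linarith
    _ = 2 ^ m * ((k : ℝ) + 1) ^ ((m : ℝ) - α) := by
        rw [mul_pow, Real.rpow_sub (by positivity), Real.rpow_natCast]; ring

theorem rpow_mul_le_of_abs_log_rpow_mul_le {t y L α M : ℝ} (hα : 0 ≤ α) (hL : 0 ≤ L) (hy : 0 ≤ y)
    (ht : 0 < t) (htL : t < Real.exp (-L)) (hM : |Real.log t| ^ α * y ≤ M) : L ^ α * y ≤ M := by
  have hlog : Real.log t < -L := (log_lt_iff_lt_exp ht).mpr htL
  have hL_le : L ≤ |Real.log t| := by rw [abs_of_neg (by linarith)]; linarith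
  exact le_trans (by gcongr) hM

section Layers

variable {ι : Type*} {g : ι → ℝ} {F : ℕ → Set ι} {N : ℕ → ℝ} {b₀ : ℝ} {b : ℕ → ℝ}

theorem sum_toFinset_layer_le (hF : Monotone F) (hF_fin : ∀ k, (F k).Finite)
    (hN : ∀ k, ((F k).ncard : ℝ) ≤ N k) (hb₀ : 0 ≤ b₀) (hb : 0 ≤ b)
    (hg₀ : ∀ i ∈ F 0, g i ≤ b₀) (hg_succ : ∀ k, ∀ i ∈ F (k + 1), i ∉ F k → g i ≤ b k) (J : ℕ) :
    ∑ i ∈ (hF_fin J).toFinset, g i ≤ N 0 * b₀ + ∑ k ∈ Finset.range J, N (k + 1) * b k := by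
  classical
  have layer_le : ∀ (k : ℕ) (s : Finset ι) (c : ℝ), 0 ≤ c → s ⊆ (hF_fin k).toFinset →
      (∀ i ∈ s, g i ≤ c) → ∑ i ∈ s, g i ≤ N k * c := fun k s c hc hs hgc => calc
    ∑ i ∈ s, g i ≤ s.card * c := by simpa using Finset.sum_le_card_nsmul s g c hgc
    _ ≤ (F k).ncard * c := by
      gcongr
      rw [Set.ncard_eq_toFinset_card _ (hF_fin k)]
      exact_mod_cast Finset.card_le_card hs
    _ ≤ N k * c := by gcongr; exact hN k
  induction J with
  | zero => simpa using layer_le 0 _ b₀ hb₀ subset_rfl fun i hi => hg₀ i (by simpa using hi)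
  | succ J ih =>
    have hsub : (hF_fin J).toFinset ⊆ (hF_fin (J + 1)).toFinset :=
      Set.Finite.toFinset_subset_toFinset.mpr (hF J.le_succ)
    have hnew := layer_le (J + 1) _ (b J) (hb J)
      (Finset.sdiff_subset (t := (hF_fin J).toFinset)) fun i hi => by
      simp only [Finset.mem_sdiff, Set.Finite.mem_toFinset] at hi
      exact hg_succ J i hi.1 hi.2
    rw [← Finset.sum_sdiff hsub, Finset.sum_range_succ]
    linarith

theorem summable_and_tsum_le_of_layers (hg : 0 ≤ g) (hF : Monotone F)
    (hg_supp : ∀ i, g i ≠ 0 → ∃ k, i ∈ F k) (hF_fin : ∀ k, (F k).Finite)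
    (hN : ∀ k, ((F k).ncard : ℝ) ≤ N k) (hb₀ : 0 ≤ b₀) (hb : 0 ≤ b)
    (hg₀ : ∀ i ∈ F 0, g i ≤ b₀) (hg_succ : ∀ k, ∀ i ∈ F (k + 1), i ∉ F k → g i ≤ b k)
    (hsum : Summable fun k => N (k + 1) * b k) :
    Summable g ∧ ∑' i, g i ≤ N 0 * b₀ + ∑' k, N (k + 1) * b k := by
  classical
  have hNb : 0 ≤ fun k => N (k + 1) * b k := fun k =>
    mul_nonneg (le_trans (Nat.cast_nonneg _) (hN _)) (hb k)
  suffices h : ∀ u : Finset ι, ∑ i ∈ u, g i ≤ N 0 * b₀ + ∑' k, N (k + 1) * b k from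
    ⟨summable_of_sum_le hg h, Real.tsum_le_of_sum_le hg h⟩
  intro u
  choose! layer hlayer using hg_supp
  have hu : ∀ i ∈ u, g i ≠ 0 → i ∈ (hF_fin (u.sup layer)).toFinset := fun i hi hgi => by
    simpa using hF (Finset.le_sup hi) (hlayer i hgi)
  calc ∑ i ∈ u, g i = ∑ i ∈ u with g i ≠ 0, g i := (Finset.sum_filter_ne_zero u).symm
    _ ≤ ∑ i ∈ (hF_fin (u.sup layer)).toFinset, g i :=
      Finset.sum_le_sum_of_subset_of_nonneg (fun i hi => by
        simp only [Finset.mem_filter] at hi; exact hu i hi.1 hi.2) fun i _ _ => hg i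
    _ ≤ N 0 * b₀ + ∑ k ∈ Finset.range (u.sup layer), N (k + 1) * b k :=
      sum_toFinset_layer_le hF hF_fin hN hb₀ hb hg₀ hg_succ _
    _ ≤ N 0 * b₀ + ∑' k, N (k + 1) * b k := by
      gcongr; exact hsum.sum_le_tsum _ fun k _ => hNb k

end Layers

/-- Indices are shifted by one: `n` stands for `z (n + 1)`, as in the series of the theorem. -/
def awayFromOne (h : ℝ) (z : ℕ → ℂ) (k : ℕ) : Set ℕ :=
  {n | Real.exp (-((k : ℝ) + 1) / h) ≤ ‖z (n + 1) - 1‖}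

section AwayFromOne

variable {h : ℝ} {z : ℕ → ℂ}

theorem awayFromOne_mono (hh : 0 < h) : Monotone (awayFromOne h z) := fun k l hkl n hn =>
  le_trans (Real.exp_le_exp.mpr (by gcongr)) hn

theorem exists_mem_awayFromOne (hh : 0 < h) {n : ℕ} (hn : z (n + 1) ≠ 1) :
    ∃ k, n ∈ awayFromOne h z k := by
  have hpos : 0 < ‖z (n + 1) - 1‖ := norm_pos_iff.mpr (sub_ne_zero.mpr hn)
  obtain ⟨k, hk⟩ := exists_nat_gt (-h * Real.log ‖z (n + 1) - 1‖)
  refine ⟨k, (Real.exp_le_exp.mpr ?_).trans_eq (Real.exp_log hpos)⟩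
  rw [div_le_iff₀ hh]
  nlinarith

theorem awayFromOne_finite_and_ncard_le {N : ℝ → ℝ}
    (hcount : ∀ L : ℝ, 1 ≤ L → {n : ℕ | 1 ≤ n ∧ Real.exp (-L / h) ≤ ‖z n - 1‖}.Finite ∧
      ({n : ℕ | 1 ≤ n ∧ Real.exp (-L / h) ≤ ‖z n - 1‖}.ncard : ℝ) ≤ N L) (k : ℕ) :
    (awayFromOne h z k).Finite ∧ ((awayFromOne h z k).ncard : ℝ) ≤ N (k + 1) := by
  obtain ⟨hfin, hcard⟩ := hcount (k + 1) (by simp)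
  have hpre : awayFromOne h z k =
      (· + 1) ⁻¹' {n : ℕ | 1 ≤ n ∧ Real.exp (-((k : ℝ) + 1) / h) ≤ ‖z n - 1‖} := by
    ext n
    simp only [awayFromOne, Set.mem_preimage, Set.mem_ofPred_eq, le_add_iff_nonneg_left, zero_le,
      true_and]
  rw [hpre]
  refine ⟨hfin.preimage (add_left_injective 1).injOn, le_trans ?_ hcard⟩
  exact_mod_cast (Set.ncard_preimage_of_injective_subset_range (add_left_injective 1)
    fun n (hn : 1 ≤ n ∧ _) => ⟨n - 1, Nat.sub_add_cancel hn.1⟩).le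

end AwayFromOne

theorem rpow_mul_norm_le_of_mem_awayFromOne_succ {h α M : ℝ} {z : ℕ → ℂ} {f : ℂ → ℂ}
    (hh : 0 < h) (hα : 0 ≤ α)
    (hM : ∀ w ∈ Metric.sphere (0 : ℂ) 1, w ≠ 1 → |Real.log ‖w - 1‖| ^ α * ‖f w‖ ≤ M)
    {n k : ℕ} (hz : z (n + 1) ∈ Metric.sphere (0 : ℂ) 1) (hn : n ∈ awayFromOne h z (k + 1))
    (hn' : n ∉ awayFromOne h z k) :
    (((k : ℝ) + 1) / h) ^ α * ‖f (z (n + 1))‖ ≤ M := by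
  simp only [awayFromOne, Set.mem_ofPred_eq, not_le, neg_div] at hn hn'
  have hpos : 0 < ‖z (n + 1) - 1‖ := (Real.exp_pos _).trans_le hn
  have hne : z (n + 1) ≠ 1 := sub_ne_zero.mp (norm_pos_iff.mp hpos)
  exact rpow_mul_le_of_abs_log_rpow_mul_le hα (by positivity) (norm_nonneg _) hpos hn'
    (hM _ hz hne)

theorem norm_le_sSup_image_sphere {f : ℂ → ℂ} (hf : ContinuousOn f (Metric.sphere (0 : ℂ) 1))
    {w : ℂ} (hw : w ∈ Metric.sphere (0 : ℂ) 1) :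
    ‖f w‖ ≤ sSup ((fun w => ‖f w‖) '' Metric.sphere (0 : ℂ) 1) :=
  le_csSup ((isCompact_sphere 0 1).image_of_continuousOn hf.norm).bddAbove ⟨w, hw, rfl⟩

theorem sSup_norm_image_sphere_nonneg {f : ℂ → ℂ} (hf : ContinuousOn f (Metric.sphere (0 : ℂ) 1)) :
    0 ≤ sSup ((fun w => ‖f w‖) '' Metric.sphere (0 : ℂ) 1) :=
  (norm_nonneg _).trans (norm_le_sSup_image_sphere hf (w := 1) (by simp))

noncomputable def layerSeries (p : ℕ) (α : ℝ) : ℝ :=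
  ∑' k : ℕ, ((k : ℝ) + 2) ^ p / ((k : ℝ) + 1) ^ α

theorem layerSeries_nonneg (p : ℕ) (α : ℝ) : 0 ≤ layerSeries p α :=
  tsum_nonneg fun k => by positivity

theorem summable_and_tsum_norm_comp_le {h α C₀ M : ℝ} {p : ℕ} {z : ℕ → ℂ} {f : ℂ → ℂ}
    (hh : 0 < h) (hα : (p : ℝ) + 1 < α) (hz : ∀ n : ℕ, 1 ≤ n → ‖z n‖ = 1)
    (hcount : ∀ L : ℝ, 1 ≤ L →
      {n : ℕ | 1 ≤ n ∧ Real.exp (-L / h) ≤ ‖z n - 1‖}.Finite ∧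
        (({n : ℕ | 1 ≤ n ∧ Real.exp (-L / h) ≤ ‖z n - 1‖}.ncard : ℝ) ≤ C₀ * (L / h) ^ p))
    (hf : ContinuousOn f (Metric.sphere (0 : ℂ) 1)) (hf1 : f 1 = 0)
    (hM : ∀ w ∈ Metric.sphere (0 : ℂ) 1, w ≠ 1 → |Real.log ‖w - 1‖| ^ α * ‖f w‖ ≤ M) :
    Summable (fun n : ℕ => ‖f (z (n + 1))‖) ∧
      ∑' n : ℕ, ‖f (z (n + 1))‖ ≤
        C₀ * (1 / h) ^ p * sSup ((fun w => ‖f w‖) '' Metric.sphere (0 : ℂ) 1) +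
          C₀ * M * (h ^ α / h ^ p) * layerSeries p α := by
  have hα₀ : 0 ≤ α := by linarith [(Nat.cast_nonneg p : (0 : ℝ) ≤ p)]
  have hzs : ∀ n, z (n + 1) ∈ Metric.sphere (0 : ℂ) 1 := fun n => by
    simpa using hz (n + 1) n.succ_pos
  have hM₀ : 0 ≤ M := le_trans (by positivity) (hM (-1) (by simp) (by norm_num))
  have hterm :
      (fun k : ℕ => C₀ * ((((k + 1 : ℕ) : ℝ) + 1) / h) ^ p * (M / (((k : ℝ) + 1) / h) ^ α)) =
        fun k : ℕ => C₀ * M * (h ^ α / h ^ p) * (((k : ℝ) + 2) ^ p / ((k : ℝ) + 1) ^ α) := by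
    ext k
    rw [div_pow, Real.div_rpow (by positivity) hh.le]
    push_cast
    field_simp
    ring
  have hlayers := summable_and_tsum_le_of_layers (g := fun n => ‖f (z (n + 1))‖)
    (N := fun k => C₀ * (((k : ℝ) + 1) / h) ^ p) (b := fun k => M / (((k : ℝ) + 1) / h) ^ α)
    (fun n => norm_nonneg _) (awayFromOne_mono hh)
    (fun n hn => exists_mem_awayFromOne hh fun h1 => hn (by simp [h1, hf1]))
    (fun k => (awayFromOne_finite_and_ncard_le hcount k).1)
    (fun k => (awayFromOne_finite_and_ncard_le hcount k).2)
    (sSup_norm_image_sphere_nonneg hf) (fun k => by positivity)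
    (fun n _ => norm_le_sSup_image_sphere hf (hzs n))
    (fun k n hn hn' => by
      rw [le_div_iff₀ (by positivity), mul_comm]
      exact rpow_mul_norm_le_of_mem_awayFromOne_succ hh hα₀ hM (hzs n) hn hn')
    (by rw [hterm]; exact (summable_add_two_pow_div_add_one_rpow hα).mul_left _)
  rw [hterm, tsum_mul_left] at hlayers
  simpa [layerSeries] using hlayers

theorem mul_pow_mul_add_le {a h α C₀ S M K : ℝ} (p : ℕ) (ha : 0 ≤ a) (hh₀ : 0 < h) (hh₁ : h < 1)
    (hα : 0 ≤ α) (hC₀ : 0 ≤ C₀) (hS : 0 ≤ S) (hM : 0 ≤ M) (hK : 0 ≤ K) :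
    (a * h) ^ p * (C₀ * (1 / h) ^ p * S + C₀ * M * (h ^ α / h ^ p) * K) ≤
      a ^ p * C₀ * (1 + K) * (S + M) := by
  have hhα : h ^ α ≤ 1 := Real.rpow_le_one hh₀.le hh₁.le hα
  calc (a * h) ^ p * (C₀ * (1 / h) ^ p * S + C₀ * M * (h ^ α / h ^ p) * K)
      = a ^ p * C₀ * (S + h ^ α * M * K) := by
        rw [mul_pow, one_div, inv_pow]
        field_simp
    _ ≤ a ^ p * C₀ * ((1 + K) * (S + M)) := by
        gcongr
        nlinarith [mul_nonneg hK hS, mul_le_mul_of_nonneg_right hhα (mul_nonneg hM hK)]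
    _ = a ^ p * C₀ * (1 + K) * (S + M) := by ring

/-- Lemma 6 of the paper: given the eigenvalue counting bound, for every `f` in the
weighted space `C⁰_α(S¹)` (with `α > d`) the weighted sum of `|f(z_n)|` is controlled
by `C (‖f‖_{C⁰} + ‖f‖_α)`, uniformly in `h ∈ (0,1)`. -/
theorem stmt_4 (d : ℕ) (hd : 2 ≤ d) (α : ℝ) (hα : (d : ℝ) < α) (C₀ : ℝ) (hC₀ : 0 < C₀) :
    ∃ C : ℝ, 0 < C ∧
      ∀ h ∈ Set.Ioo (0 : ℝ) 1, ∀ z : ℕ → ℂ,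
        (∀ n : ℕ, 1 ≤ n → ‖z n‖ = 1) →
        (∀ L : ℝ, 1 ≤ L →
          {n : ℕ | 1 ≤ n ∧ Real.exp (-L / h) ≤ ‖z n - 1‖}.Finite ∧
            (({n : ℕ | 1 ≤ n ∧ Real.exp (-L / h) ≤ ‖z n - 1‖}.ncard : ℝ) ≤
              C₀ * (L / h) ^ (d - 1))) →
        ∀ f : ℂ → ℂ, ContinuousOn f (Metric.sphere (0 : ℂ) 1) → f 1 = 0 →
        ∀ M : ℝ,
          (∀ w ∈ Metric.sphere (0 : ℂ) 1, w ≠ 1 →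
            |Real.log (‖w - 1‖)| ^ α * ‖f w‖ ≤ M) →
          Summable (fun n : ℕ => ‖f (z (n + 1))‖) ∧
            (2 * π * h) ^ (d - 1) * ∑' n : ℕ, ‖f (z (n + 1))‖ ≤
              C * (sSup ((fun w => ‖f w‖) '' Metric.sphere (0 : ℂ) 1) + M) := by
  have hαd : ((d - 1 : ℕ) : ℝ) + 1 < α := by rw [Nat.cast_sub (by omega)]; push_cast; linarith
  have hK := layerSeries_nonneg (d - 1) α
  refine ⟨(2 * π) ^ (d - 1) * C₀ * (1 + layerSeries (d - 1) α), by positivity, ?_⟩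
  rintro h ⟨hh₀, hh₁⟩ z hz hcount f hf hf1 M hM
  obtain ⟨hsum, hle⟩ := summable_and_tsum_norm_comp_le hh₀ hαd hz hcount hf hf1 hM
  have hM₀ : 0 ≤ M := le_trans (by positivity) (hM (-1) (by simp) (by norm_num))
  have hα₀ : 0 ≤ α := by linarith [(Nat.cast_nonneg d : (0 : ℝ) ≤ d)]
  exact ⟨hsum, (mul_le_mul_of_nonneg_left hle (by positivity)).trans <|
    mul_pow_mul_add_le (d - 1) (by positivity) hh₀ hh₁ hα₀ hC₀.le
      (sSup_norm_image_sphere_nonneg hf) hM₀ hK⟩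
end

section
/- Let α > α' > 0 be real numbers and let f be a continuous function on the unit circle {z ∈ ℂ : |z| = 1} such that the function equal to f(z)|log|z−1||^α for z ≠ 1 and to 0 at z = 1 is continuous on the circle. Then for every ε > 0 there exists a trigonometric polynomial q (a finite sum q(z) = Σ_{k} c_k z^k over integers k ∈ ℤ, c_k ∈ ℂ) with q(1) = 0, such that sup_{|z|=1} |f(z) − q(z)| ≤ ε and sup_{|z|=1, z≠1} |log|z−1||^{α'} |f(z) − q(z)| ≤ ε. -/
/-!
Write `ω(w) = max 1 |log |w - 1||^α'`. Near `1` both `|f|` and `|log |w - 1||^α' |f|` are bounded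
by `|f| |log |w - 1||^α → 0`, so `ω |f| → 0` at `1` (in particular `f 1 = 0`, as `1` is not
isolated on the circle). Cut `f` off by a continuous `χ(|w - 1|)` vanishing near `1`: then
`χ f / (w - 1)` is continuous on the circle, hence uniformly close to a trigonometric polynomial
`P` by density of the Fourier monomials, and `q = (w - 1) P` vanishes at `1`. In
`f - q = (1 - χ) f + (w - 1) (χ f / (w - 1) - P)` the first term is small in the weighted norm
because `ω |f|` is small where `χ ≠ 1`, the second because `ω(w) |w - 1|` is bounded on the
circle (`t |log t|^α' → 0` as `t → 0`).
-/

open Real Complex Filter Topology Metric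

section LaurentSum

variable {𝕜 : Type*} [Field 𝕜]

noncomputable def laurentSum (d : ℤ →₀ 𝕜) (w : 𝕜) : 𝕜 :=
  d.sum fun k a => a * w ^ k

theorem laurentSum_mapDomain_add_one_sub (b : ℤ →₀ 𝕜) {w : 𝕜} (hw : w ≠ 0) :
    laurentSum (b.mapDomain (· + 1) - b) w = (w - 1) * laurentSum b w := by
  simp only [laurentSum]
  rw [Finsupp.sum_sub_index (fun _ _ _ => sub_mul _ _ _),
    Finsupp.sum_mapDomain_index (fun _ => zero_mul _) (fun _ _ _ => add_mul _ _ _),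
    sub_mul, one_mul, Finsupp.mul_sum]
  simp only [zpow_add_one₀ hw, mul_assoc, mul_comm w]

end LaurentSum

theorem exists_laurentSum_approx_on_sphere {h : ℂ → ℂ} (hh : ContinuousOn h (sphere 0 1))
    {η : ℝ} (hη : 0 < η) :
    ∃ b : ℤ →₀ ℂ, ∀ w ∈ sphere (0 : ℂ) 1, ‖h w - laurentSum b w‖ < η := by
  let H : C(UnitAddCircle, ℂ) := ⟨fun x => h (AddCircle.toCircle x),
    hh.comp_continuous (by fun_prop) fun x => by simp [Circle.norm_coe]⟩
  have hH : H ∈ (Submodule.span ℂ (Set.range fourier)).topologicalClosure := by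
    rw [span_fourier_closure_eq_top]; trivial
  obtain ⟨P, hP, hHP⟩ := Metric.mem_closure_iff.1 hH η hη
  obtain ⟨b, rfl⟩ := Finsupp.mem_span_range_iff_exists_finsupp.1 hP
  refine ⟨b, fun w hw => ?_⟩
  obtain ⟨x, hx⟩ := (AddCircle.homeomorphCircle one_ne_zero).surjective ⟨w, hw⟩
  rw [AddCircle.homeomorphCircle_apply] at hx
  obtain rfl : (AddCircle.toCircle x : ℂ) = w := congrArg Subtype.val hx
  calc ‖h _ - laurentSum b _‖ = dist (H x) ((b.sum fun k a => a • fourier k) x) := by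
        simp only [dist_eq_norm, laurentSum, Finsupp.sum, ContinuousMap.coe_sum, Finset.sum_apply,
          ContinuousMap.coe_smul, Pi.smul_apply, fourier_apply, AddCircle.toCircle_zsmul,
          Circle.coe_zpow, smul_eq_mul]
        rfl
    _ ≤ dist H _ := ContinuousMap.dist_apply_le_dist x
    _ < η := hHP

theorem continuous_smoothTransition_div_sub {δ : ℝ} (hδ : 0 < δ) (a : ℂ) :
    Continuous fun w : ℂ => (smoothTransition (‖w - a‖ / δ - 1) : ℂ) / (w - a) := by
  refine continuous_iff_continuousAt.2 fun z => ?_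
  obtain rfl | hz := eq_or_ne z a
  · refine (continuousAt_const (y := (0 : ℂ))).congr
      (eventuallyEq_of_mem (ball_mem_nhds z hδ) fun w hw => ?_)
    rw [mem_ball, dist_eq_norm] at hw
    rw [smoothTransition.zero_of_nonpos (by rw [sub_nonpos, div_le_one hδ]; exact hw.le),
      ofReal_zero, zero_div]
  · have hχ : Continuous fun w : ℂ => (smoothTransition (‖w - a‖ / δ - 1) : ℂ) :=
      continuous_ofReal.comp (smoothTransition.continuous.comp (by fun_prop))
    exact hχ.continuousAt.div (by fun_prop) (sub_ne_zero.2 hz)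

theorem exists_max_one_abs_log_rpow_mul_le {β : ℝ} (hβ : 0 < β) :
    ∃ C, ∀ t ∈ Set.Icc (0 : ℝ) 2, max 1 (|Real.log t| ^ β) * t ≤ C := by
  refine ⟨max 2 (β ^ β), fun t ⟨ht0, ht2⟩ => ?_⟩
  rw [max_mul_of_nonneg _ _ ht0, one_mul]
  refine max_le (ht2.trans (le_max_left _ _)) ?_
  obtain rfl | ht0 := ht0.eq_or_lt
  · simp only [mul_zero]; positivity
  obtain ht1 | ht1 := le_or_gt t 1
  · have hlog := abs_log_mul_self_rpow_lt t β⁻¹ ht0 ht1 (inv_pos.2 hβ)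
    rw [one_div, inv_inv] at hlog
    calc |Real.log t| ^ β * t = |Real.log t * t ^ β⁻¹| ^ β := by
          rw [abs_mul, abs_of_pos (rpow_pos_of_pos ht0 _), mul_rpow (abs_nonneg _)
            (rpow_nonneg ht0.le _), ← rpow_mul ht0.le, inv_mul_cancel₀ hβ.ne', rpow_one]
      _ ≤ β ^ β := rpow_le_rpow (abs_nonneg _) hlog.le hβ.le
      _ ≤ _ := le_max_right _ _
  · have hlog : |Real.log t| ≤ 1 := by
      rw [abs_of_pos (Real.log_pos ht1)]
      linarith [Real.log_le_log (by positivity) ht2, Real.log_two_lt_d9]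
    calc |Real.log t| ^ β * t ≤ 1 * 2 :=
          mul_le_mul (rpow_le_one (abs_nonneg _) hlog hβ.le) ht2 ht0.le zero_le_one
      _ ≤ _ := by rw [one_mul]; exact le_max_left _ _

theorem exists_laurentSum_weighted_approx {f : ℂ → ℂ} (hf : ContinuousOn f (sphere 0 1))
    {ω : ℂ → ℝ} (hω : ∀ w ∈ sphere (0 : ℂ) 1, 0 ≤ ω w) {C : ℝ}
    (hC : ∀ w ∈ sphere (0 : ℂ) 1, ω w * ‖w - 1‖ ≤ C)
    (hlim : Tendsto (fun w => ω w * ‖f w‖) (𝓝[sphere 0 1] 1) (𝓝 0)) {ε : ℝ} (hε : 0 < ε) :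
    ∃ d : ℤ →₀ ℂ, laurentSum d 1 = 0 ∧
      ∀ w ∈ sphere (0 : ℂ) 1, ω w * ‖f w - laurentSum d w‖ ≤ ε := by
  obtain ⟨r, hr, hsmall⟩ : ∃ r > 0, ∀ w ∈ sphere (0 : ℂ) 1, ‖w - 1‖ < r →
      ω w * ‖f w‖ ≤ ε / 2 := by
    have := hlim.eventually (eventually_le_nhds (half_pos hε))
    rw [eventually_nhdsWithin_iff, Metric.eventually_nhds_iff] at this
    obtain ⟨r, hr, h⟩ := this
    exact ⟨r, hr, fun w hw hwr => h (by rwa [dist_eq_norm]) hw⟩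
  have hδ : 0 < r / 2 := half_pos hr
  set χ : ℂ → ℝ := fun w => smoothTransition (‖w - 1‖ / (r / 2) - 1)
  have hC0 : 0 ≤ C := by simpa using hC 1 (by simp)
  set η := ε / (2 * (C + 1)) with hη
  have hCη : C * η ≤ ε / 2 := by
    rw [hη, mul_div_assoc', div_le_div_iff₀ (by positivity) two_pos]
    nlinarith
  obtain ⟨b, hb⟩ := exists_laurentSum_approx_on_sphere
    (hf.mul (continuous_smoothTransition_div_sub hδ 1).continuousOn) (by positivity : 0 < η)
  refine ⟨b.mapDomain (· + 1) - b,
    by rw [laurentSum_mapDomain_add_one_sub b one_ne_zero, sub_self, zero_mul], fun w hw => ?_⟩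
  have hw0 : w ≠ 0 := by rintro rfl; simp at hw
  have hdecomp : f w - laurentSum (b.mapDomain (· + 1) - b) w = ((1 - χ w : ℝ) : ℂ) * f w +
      (w - 1) * (f w * ((χ w : ℂ) / (w - 1)) - laurentSum b w) := by
    rw [laurentSum_mapDomain_add_one_sub b hw0]
    obtain rfl | hw1 := eq_or_ne w 1
    · simp [χ, smoothTransition.zero_of_nonpos]
    · field_simp [sub_ne_zero.2 hw1]
      push_cast
      ring
  have hcut : ω w * ‖((1 - χ w : ℝ) : ℂ) * f w‖ ≤ ε / 2 := by
    obtain hwr | hwr := lt_or_ge ‖w - 1‖ r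
    · rw [norm_mul, norm_real, norm_eq_abs, mul_left_comm]
      refine (mul_le_of_le_one_left (mul_nonneg (hω w hw) (norm_nonneg _)) ?_).trans
        (hsmall w hw hwr)
      have : 0 ≤ χ w ∧ χ w ≤ 1 := ⟨smoothTransition.nonneg _, smoothTransition.le_one _⟩
      rw [abs_le]
      constructor <;> linarith
    · have : χ w = 1 := smoothTransition.one_of_one_le (by
        rw [le_sub_iff_add_le, le_div_iff₀ hδ]; linarith)
      rw [this, sub_self, ofReal_zero, zero_mul, norm_zero, mul_zero]
      exact (half_pos hε).le
  calc ω w * ‖f w - laurentSum _ w‖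
      ≤ ω w * ‖((1 - χ w : ℝ) : ℂ) * f w‖ +
          ω w * ‖w - 1‖ * ‖f w * ((χ w : ℂ) / (w - 1)) - laurentSum b w‖ := by
        rw [hdecomp, mul_assoc, ← norm_mul, ← mul_add]
        exact mul_le_mul_of_nonneg_left (norm_add_le _ _) (hω w hw)
    _ ≤ ε / 2 + C * η := add_le_add hcut (mul_le_mul (hC w hw) (hb w hw).le (norm_nonneg _) hC0)
    _ ≤ ε := by linarith

theorem neBot_nhdsWithin_sphere_diff_one : (𝓝[sphere (0 : ℂ) 1 \ {1}] 1).NeBot := by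
  have h1 : (1 : ℂ) ∈ sphere 0 1 := by simp
  have : ConnectedSpace (sphere (0 : ℂ) 1) := isConnected_iff_connectedSpace.1
    (isConnected_sphere (by simp [rank_real_complex]) 0 zero_le_one)
  have : Nontrivial (sphere (0 : ℂ) 1) :=
    ⟨⟨1, h1⟩, ⟨-1, by simp⟩, fun h => by norm_num [Subtype.ext_iff] at h⟩
  exact Tendsto.neBot (f := Subtype.val) (x := 𝓝[≠] (⟨1, h1⟩ : sphere (0 : ℂ) 1)) <|
    tendsto_nhdsWithin_iff.2 ⟨continuous_subtype_val.continuousWithinAt.tendsto,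
      eventually_nhdsWithin_of_forall fun w hw => ⟨w.2, fun h => hw (Subtype.ext h)⟩⟩

theorem tendsto_max_one_abs_log_rpow_mul_norm {α α' : ℝ} (hα' : 0 < α') (hαα' : α' < α)
    {f : ℂ → ℂ}
    (hf : ContinuousWithinAt f (sphere 0 1) 1)
    (hext : ContinuousWithinAt (fun w : ℂ => if w = 1 then (0 : ℂ)
        else f w * Complex.ofReal (|Real.log ‖w - 1‖| ^ α)) (sphere 0 1) 1) :
    Tendsto (fun w => max 1 (|Real.log ‖w - 1‖| ^ α') * ‖f w‖) (𝓝[sphere 0 1] 1) (𝓝 0) := by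
  set g := fun w : ℂ => if w = 1 then (0 : ℂ)
    else f w * Complex.ofReal (|Real.log ‖w - 1‖| ^ α)
  have hg : Tendsto (fun w => ‖g w‖) (𝓝[sphere 0 1] 1) (𝓝 0) := by
    simpa [g] using hext.tendsto.norm
  have hle : ∀ᶠ w in 𝓝[sphere 0 1] 1, w ≠ 1 →
      max 1 (|Real.log ‖w - 1‖| ^ α') * ‖f w‖ ≤ ‖g w‖ := by
    filter_upwards [mem_nhdsWithin_of_mem_nhds (ball_mem_nhds (1 : ℂ) (exp_pos (-1)))]
      with w hw hw1
    rw [mem_ball, dist_eq_norm] at hw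
    have hL : 1 ≤ |Real.log ‖w - 1‖| := by
      have := Real.log_le_log (norm_pos_iff.2 (sub_ne_zero.2 hw1)) hw.le
      rw [Real.log_exp] at this
      rw [abs_of_neg (by linarith)]
      linarith
    simp only [g, if_neg hw1, norm_mul, norm_real, norm_eq_abs,
      abs_of_nonneg (rpow_nonneg (abs_nonneg _) _)]
    rw [mul_comm ‖f w‖]
    exact mul_le_mul_of_nonneg_right (max_le (one_le_rpow hL (hα'.trans hαα').le)
      (rpow_le_rpow_of_exponent_le hL hαα'.le)) (norm_nonneg (f w))
  have hf1 : f 1 = 0 := by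
    have := neBot_nhdsWithin_sphere_diff_one
    have hle' : ∀ᶠ w in 𝓝[sphere 0 1 \ {1}] 1, ‖f w‖ ≤ ‖g w‖ := by
      filter_upwards [nhdsWithin_mono _ Set.sdiff_subset hle, self_mem_nhdsWithin] with w hw hw1
      exact (le_mul_of_one_le_left (norm_nonneg (f w)) (le_max_left _ _)).trans (hw hw1.2)
    exact tendsto_nhds_unique (hf.tendsto.mono_left (nhdsWithin_mono _ Set.sdiff_subset))
      (squeeze_zero_norm' hle' (hg.mono_left (nhdsWithin_mono _ Set.sdiff_subset)))
  refine squeeze_zero' (Eventually.of_forall fun w => by positivity) ?_ hg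
  filter_upwards [hle] with w hw
  obtain rfl | hw1 := eq_or_ne w 1
  · simp [hf1]
  · exact hw hw1

/-- Density argument in the proof of Theorem 3 of the paper: any `f ∈ C⁰_α(S¹)` can be
approximated, both uniformly and in the weighted norm `‖·‖_{α'}` (for `α > α' > 0`),
by trigonometric polynomials vanishing at `1`. -/
theorem stmt_5 (α α' : ℝ) (hα' : 0 < α') (hαα' : α' < α)
    (f : ℂ → ℂ) (hf : ContinuousOn f (Metric.sphere (0 : ℂ) 1))
    (hext : ContinuousOn
      (fun w : ℂ => if w = 1 then (0 : ℂ)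
        else f w * Complex.ofReal (|Real.log (‖w - 1‖)| ^ α))
      (Metric.sphere (0 : ℂ) 1)) :
    ∀ ε : ℝ, 0 < ε →
      ∃ (s : Finset ℤ) (c : ℤ → ℂ),
        (∑ k ∈ s, c k * (1 : ℂ) ^ k = 0) ∧
        (∀ w ∈ Metric.sphere (0 : ℂ) 1,
          ‖f w - ∑ k ∈ s, c k * w ^ k‖ ≤ ε) ∧
        (∀ w ∈ Metric.sphere (0 : ℂ) 1, w ≠ 1 →
          |Real.log (‖w - 1‖)| ^ α' *
            ‖f w - ∑ k ∈ s, c k * w ^ k‖ ≤ ε) := by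
  intro ε hε
  have h1 : (1 : ℂ) ∈ sphere 0 1 := by simp
  have hdist : ∀ w ∈ sphere (0 : ℂ) 1, ‖w - 1‖ ∈ Set.Icc (0 : ℝ) 2 := fun w hw =>
    ⟨norm_nonneg _, (norm_sub_le _ _).trans (by rw [mem_sphere_zero_iff_norm.1 hw]; norm_num)⟩
  obtain ⟨C, hC⟩ := exists_max_one_abs_log_rpow_mul_le hα'
  obtain ⟨d, hd1, hd⟩ := exists_laurentSum_weighted_approx hf
    (fun w _ => zero_le_one.trans (le_max_left 1 (|Real.log ‖w - 1‖| ^ α')))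
    (fun w hw => hC _ (hdist w hw))
    (tendsto_max_one_abs_log_rpow_mul_norm hα' hαα' (hf 1 h1) (hext 1 h1)) hε
  refine ⟨d.support, d, hd1, fun w hw => ?_, fun w hw _ => ?_⟩
  · exact (le_mul_of_one_le_left (norm_nonneg _) (le_max_left _ _)).trans (hd w hw)
  · exact (mul_le_mul_of_nonneg_right (le_max_right _ _) (norm_nonneg _)).trans (hd w hw)
end

section
/- Let d ≥ 2 be an integer, α > d a real number, V ∈ ℝ and C₀ > 0. For each h ∈ (0,1) let (z_{h,n})_{n≥1} be a sequence of complex numbers of modulus 1 such that: (i) for every real L ≥ 1 and every h ∈ (0,1), the set {n : |z_{h,n} − 1| ≥ e^{−L/h}} has cardinality at most C₀ (L/h)^{d−1}; (ii) for every nonzero integer k, the series Σ_{n≥1} (z_{h,n}^k − 1) converges absolutely and lim_{h→0} (2πh)^{d−1} Σ_{n≥1} (z_{h,n}^k − 1) = −V. Then for every continuous function f on the unit circle such that the function equal to f(z)|log|z−1||^α for z ≠ 1 and to 0 at z = 1 is continuous, the series Σ_{n≥1} f(z_{h,n}) converges absolutely for each h and lim_{h→0} (2πh)^{d−1} Σ_{n≥1}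 f(z_{h,n}) = (V/2π) ∫₀^{2π} f(e^{iθ}) dθ. -/
/-!
Weighted continuity forces `f 1 = 0`, so `f` is uniformly approximated on the circle by
trigonometric polynomials `p = ∑ c_k (z^k - 1)` vanishing at `1`. For those the trace asymptotics
give `(2πh)^{d-1} ∑ₙ p(z_{h,n}) → -V ∑ c_k = (V/2π) ∫ p`. The error `|f - p| ≤ ε` is summed
over the layers `e^{-(L+1)/h} < |z - 1| ≤ e^{-L/h}`: by the counting bound layer `L` holds
`O(((L+1)/h)^{d-1})` points, and on it `|f - p| ≲ (L/h)^{-α} + e^{-L/h}` for `L ≥ 1` (weighted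
continuity of `f`, Lipschitz bound for `p`). As `α > d`, dominated convergence shows that the
layers `L ≥ 1` contribute `o(h^{1-d})`, so only `O(ε)` is left.
-/

open Real Complex Filter Topology Metric

lemma tendsto_of_forall_approx {ι E : Type*} [PseudoMetricSpace E] {l : Filter ι} {F : ι → E}
    {x : E} (K : ℝ) (happrox : ∀ ε > 0, ∃ G : ι → E, ∃ y, Tendsto G l (𝓝 y) ∧
      ∀ᶠ i in l, dist (F i) (G i) + dist y x ≤ K * ε) : Tendsto F l (𝓝 x) := by
  rw [Metric.tendsto_nhds]
  intro δ hδ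
  obtain ⟨G, y, hG, hFG⟩ := happrox (δ / (2 * (|K| + 1))) (by positivity)
  have hKε : K * (δ / (2 * (|K| + 1))) < δ / 2 := by
    calc K * (δ / (2 * (|K| + 1))) ≤ |K| * (δ / (2 * (|K| + 1))) :=
          mul_le_mul_of_nonneg_right (le_abs_self K) (by positivity)
      _ < (|K| + 1) * (δ / (2 * (|K| + 1))) := by gcongr; linarith
      _ = δ / 2 := by field_simp
  filter_upwards [Metric.tendsto_nhds.1 hG (δ / 2) (half_pos hδ), hFG] with i hGi hFGi
  calc dist (F i) x ≤ dist (F i) (G i) + dist (G i) y + dist y x := dist_triangle4 _ _ _ _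
    _ < δ := by linarith

lemma norm_zpow_sub_one_le {w : ℂ} (hw : ‖w‖ = 1) (k : ℤ) : ‖w ^ k - 1‖ ≤ |(k : ℝ)| * ‖w - 1‖ := by
  have hpow (n : ℕ) : ‖w ^ n - 1‖ ≤ n * ‖w - 1‖ := by
    rw [← geom_sum_mul, norm_mul]
    gcongr
    calc ‖∑ i ∈ Finset.range n, w ^ i‖ ≤ ∑ i ∈ Finset.range n, ‖w ^ i‖ := norm_sum_le _ _
      _ = n := by simp [hw]
  have hw0 : w ≠ 0 := norm_ne_zero_iff.1 (by rw [hw]; exact one_ne_zero)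
  obtain ⟨n, rfl | rfl⟩ := Int.eq_nat_or_neg k
  · simpa using hpow n
  · have : (w ^ n)⁻¹ - 1 = -(w ^ n)⁻¹ * (w ^ n - 1) := by field_simp; ring
    rw [zpow_neg, zpow_natCast, this, norm_mul, norm_neg, norm_inv, norm_pow, hw, one_pow,
      inv_one, one_mul]
    simpa using hpow n

noncomputable def trigPoly (s : Finset ℤ) (c : ℤ → ℂ) (w : ℂ) : ℂ := ∑ k ∈ s, c k * (w ^ k - 1)

lemma norm_trigPoly_le (s : Finset ℤ) (c : ℤ → ℂ) {w : ℂ} (hw : ‖w‖ = 1) :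
    ‖trigPoly s c w‖ ≤ (∑ k ∈ s, ‖c k‖ * |(k : ℝ)|) * ‖w - 1‖ := by
  rw [trigPoly, Finset.sum_mul]
  refine (norm_sum_le _ _).trans (Finset.sum_le_sum fun k _ => ?_)
  rw [norm_mul, mul_assoc]
  exact mul_le_mul_of_nonneg_left (norm_zpow_sub_one_le hw k) (norm_nonneg _)

lemma exists_laurentPoly_approx {f : ℂ → ℂ} (hf : ContinuousOn f (sphere 0 1)) {ε : ℝ}
    (hε : 0 < ε) : ∃ c : ℤ →₀ ℂ, ∀ w ∈ sphere (0 : ℂ) 1,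
      ‖f w - ∑ k ∈ c.support, c k * w ^ k‖ < ε := by
  let e := AddCircle.homeomorphCircle (one_ne_zero (α := ℝ))
  let F : C(AddCircle (1 : ℝ), ℂ) :=
    ⟨fun x => f (e x), hf.comp_continuous (continuous_subtype_val.comp e.continuous)
      fun x => (e x).2⟩
  have hF : F ∈ closure (Submodule.span ℂ (Set.range (fourier (T := 1))) : Set _) := by
    rw [← Submodule.topologicalClosure_coe, span_fourier_closure_eq_top]
    trivial
  obtain ⟨g, hg, hFg⟩ := Metric.mem_closure_iff.1 hF ε hε
  obtain ⟨c, rfl⟩ := Finsupp.mem_span_range_iff_exists_finsupp.1 hg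
  refine ⟨c, fun w hw => ?_⟩
  obtain ⟨x, hx⟩ := e.surjective ⟨w, hw⟩
  have hxw : ((e x : Circle) : ℂ) = w := by rw [hx]
  calc ‖f w - ∑ k ∈ c.support, c k * w ^ k‖ = dist (F x) ((c.sum fun k a => a • fourier k) x) := by
        simp [dist_eq_norm, F, Finsupp.sum, ← hxw, AddCircle.homeomorphCircle_apply,
          AddCircle.toCircle_zsmul, e]
    _ ≤ dist F _ := ContinuousMap.dist_apply_le_dist x
    _ < ε := hFg

lemma exists_trigPoly_approx {f : ℂ → ℂ} (hf : ContinuousOn f (sphere 0 1)) (hf1 : f 1 = 0)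
    {ε : ℝ} (hε : 0 < ε) : ∃ s : Finset ℤ, 0 ∉ s ∧ ∃ c : ℤ → ℂ,
      ∀ w ∈ sphere (0 : ℂ) 1, ‖f w - trigPoly s c w‖ ≤ ε := by
  obtain ⟨c, hc⟩ := exists_laurentPoly_approx hf (half_pos hε)
  refine ⟨c.support.erase 0, Finset.notMem_erase 0 _, c, fun w hw => ?_⟩
  have hq : trigPoly (c.support.erase 0) c w
      = ∑ k ∈ c.support, c k * w ^ k - ∑ k ∈ c.support, c k * 1 ^ k := by
    rw [trigPoly, Finset.sum_erase _ (by simp), ← Finset.sum_sub_distrib]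
    simp [mul_sub]
  have h1 := hc 1 (by simp)
  rw [hf1] at h1
  calc ‖f w - trigPoly (c.support.erase 0) c w‖
      = ‖(f w - ∑ k ∈ c.support, c k * w ^ k) - (0 - ∑ k ∈ c.support, c k * 1 ^ k)‖ := by
        rw [hq]; congr 1; ring
    _ ≤ ‖f w - ∑ k ∈ c.support, c k * w ^ k‖ + ‖0 - ∑ k ∈ c.support, c k * 1 ^ k‖ :=
        norm_sub_le _ _
    _ ≤ ε := by linarith [hc w hw]

lemma continuous_exp_mul_I_zpow (k : ℤ) : Continuous fun θ : ℝ => exp (θ * I) ^ k := by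
  simp_rw [← Complex.exp_int_mul]
  fun_prop

lemma continuous_trigPoly_exp (s : Finset ℤ) (c : ℤ → ℂ) :
    Continuous fun θ : ℝ => trigPoly s c (exp (θ * I)) :=
  continuous_finsetSum s fun k _ =>
    continuous_const.mul ((continuous_exp_mul_I_zpow k).sub continuous_const)

lemma integral_exp_mul_I_zpow {k : ℤ} (hk : k ≠ 0) :
    ∫ θ in (0 : ℝ)..(2 * π), exp (θ * I) ^ k = 0 := by
  have hk0 : (k : ℂ) * I ≠ 0 := mul_ne_zero (by exact_mod_cast hk) I_ne_zero
  simp_rw [← Complex.exp_int_mul, show ∀ θ : ℝ, (k : ℂ) * (θ * I) = (k * I) * θ from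
    fun θ => by ring]
  have : (k : ℂ) * I * ↑(2 * π) = k * (2 * π * I) := by push_cast; ring
  rw [integral_exp_mul_complex hk0, this, Complex.exp_int_mul_two_pi_mul_I]
  simp

lemma integral_trigPoly {s : Finset ℤ} (hs : 0 ∉ s) (c : ℤ → ℂ) :
    ∫ θ in (0 : ℝ)..(2 * π), trigPoly s c (exp (θ * I)) = -(2 * π) * ∑ k ∈ s, c k := by
  have hcont := continuous_exp_mul_I_zpow
  simp only [trigPoly]
  rw [intervalIntegral.integral_finsetSum (f := fun k (θ : ℝ) => c k * (exp (θ * I) ^ k - 1))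
    fun k _ => (continuous_const.mul ((hcont k).sub continuous_const)).intervalIntegrable _ _,
    Finset.mul_sum]
  refine Finset.sum_congr rfl fun k hk => ?_
  rw [intervalIntegral.integral_const_mul, intervalIntegral.integral_sub
    ((hcont k).intervalIntegrable _ _) intervalIntegrable_const,
    integral_exp_mul_I_zpow (ne_of_mem_of_not_mem hk hs)]
  simp
  ring

lemma dist_integral_trigPoly_le {f : ℂ → ℂ} (hf : ContinuousOn f (sphere 0 1)) {s : Finset ℤ}
    (hs : 0 ∉ s) (c : ℤ → ℂ) {ε : ℝ} (hfp : ∀ w ∈ sphere (0 : ℂ) 1, ‖f w - trigPoly s c w‖ ≤ ε)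
    (V : ℝ) : dist (-(V : ℂ) * ∑ k ∈ s, c k)
      (Complex.ofReal (V / (2 * π)) * ∫ θ in (0 : ℝ)..(2 * π), f (exp (θ * I))) ≤ |V| * ε := by
  have hexp (θ : ℝ) : exp (θ * I) ∈ sphere (0 : ℂ) 1 := by simp
  have hfc : Continuous fun θ : ℝ => f (exp (θ * I)) := hf.comp_continuous (by fun_prop) hexp
  have hπ : (0 : ℝ) < 2 * π := by positivity
  have hp : -(V : ℂ) * ∑ k ∈ s, c k = Complex.ofReal (V / (2 * π)) *
      ∫ θ in (0 : ℝ)..(2 * π), trigPoly s c (exp (θ * I)) := by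
    rw [integral_trigPoly hs]; push_cast; field_simp
  rw [hp, dist_eq_norm, ← mul_sub, ← intervalIntegral.integral_sub
    ((continuous_trigPoly_exp s c).intervalIntegrable _ _) (hfc.intervalIntegrable _ _),
    norm_mul, norm_real, Real.norm_eq_abs, abs_div, abs_of_pos hπ]
  have hint : ‖∫ θ in (0 : ℝ)..(2 * π), (trigPoly s c (exp (θ * I)) - f (exp (θ * I)))‖
      ≤ ε * |2 * π - 0| :=
    intervalIntegral.norm_integral_le_of_norm_le_const fun θ _ => by
      rw [norm_sub_rev]; exact hfp _ (hexp θ)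
  rw [sub_zero, abs_of_pos hπ] at hint
  calc |V| / (2 * π) * _ ≤ |V| / (2 * π) * (ε * (2 * π)) :=
        mul_le_mul_of_nonneg_left hint (by positivity)
    _ = |V| * ε := by field_simp

/-- `f ∈ C⁰_α(S¹)` means that `logWeighted α f` is continuous on the circle. -/
noncomputable def logWeighted (α : ℝ) (f : ℂ → ℂ) (w : ℂ) : ℂ :=
  if w = 1 then 0 else f w * ((|Real.log ‖w - 1‖| ^ α : ℝ) : ℂ)

lemma norm_logWeighted {α : ℝ} {f : ℂ → ℂ} {w : ℂ} (hw : w ≠ 1) :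
    ‖logWeighted α f w‖ = ‖f w‖ * |Real.log ‖w - 1‖| ^ α := by
  rw [logWeighted, if_neg hw, norm_mul, norm_real, norm_of_nonneg (by positivity)]

lemma eq_zero_at_one_of_continuousOn_logWeighted {α : ℝ} (hα : 0 < α) {f : ℂ → ℂ}
    (hf : ContinuousOn f (sphere 0 1)) (hW : ContinuousOn (logWeighted α f) (sphere 0 1)) :
    f 1 = 0 := by
  have h1 : (1 : ℂ) ∈ sphere 0 1 := by simp
  set F := 𝓝[sphere (0 : ℂ) 1 \ {1}] 1
  have : F.NeBot := accPt_principal_iff_nhdsWithin.1 <|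
    (isPreconnected_sphere (by simp [Complex.rank_real_complex]) 0 1).preperfect_of_nontrivial
      ⟨1, h1, -1, by simp, by norm_num⟩ 1 h1
  have hFle : F ≤ 𝓝[sphere 0 1] 1 := nhdsWithin_mono _ Set.sdiff_subset
  have hF : ∀ᶠ w in F, w ≠ 1 := eventually_nhdsWithin_of_forall fun w hw => hw.2
  have hdist : Tendsto (fun w : ℂ => ‖w - 1‖) F (𝓝[>] 0) := by
    refine tendsto_nhdsWithin_iff.2 ⟨?_, hF.mono fun w hw => norm_pos_iff.2 (sub_ne_zero.2 hw)⟩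
    have hc : Continuous fun w : ℂ => ‖w - 1‖ := by fun_prop
    exact tendsto_nhdsWithin_of_tendsto_nhds (by simpa using hc.tendsto 1)
  have hweight : Tendsto (fun w : ℂ => (|Real.log ‖w - 1‖| ^ α)) F atTop :=
    (tendsto_rpow_atTop hα).comp (tendsto_abs_atBot_atTop.comp
      (tendsto_log_nhdsGT_zero.comp hdist))
  have hWlim : Tendsto (fun w => ‖logWeighted α f w‖) F (𝓝 0) := by
    simpa [logWeighted] using ((hW 1 h1).tendsto.mono_left hFle).norm
  have hflim : Tendsto (fun w => ‖f w‖) F (𝓝 0) := by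
    refine squeeze_zero' (Eventually.of_forall fun _ => norm_nonneg _) ?_ hWlim
    filter_upwards [hF, hweight.eventually_ge_atTop 1] with w hw hw1
    rw [norm_logWeighted hw]
    exact le_mul_of_one_le_right (norm_nonneg _) hw1
  exact norm_eq_zero.1 (tendsto_nhds_unique ((hf 1 h1).tendsto.mono_left hFle).norm hflim)

lemma norm_le_of_norm_logWeighted_le {α M : ℝ} {f : ℂ → ℂ} {w : ℂ} (hw0 : 0 < ‖w - 1‖)
    (hw1 : ‖w - 1‖ < 1) (hM : ‖logWeighted α f w‖ ≤ M) :
    ‖f w‖ ≤ M * (-Real.log ‖w - 1‖) ^ (-α) := by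
  have hlog : 0 < -Real.log ‖w - 1‖ := neg_pos.2 (Real.log_neg hw0 hw1)
  rw [norm_logWeighted (sub_ne_zero.1 (norm_pos_iff.1 hw0)), abs_of_neg (neg_pos.1 hlog)] at hM
  rw [rpow_neg hlog.le, ← div_eq_mul_inv, le_div_iff₀ (rpow_pos_of_pos hlog α)]
  exact hM

def NearOneBound (α B B' : ℝ) (g : ℂ → ℂ) : Prop :=
  ∀ w ∈ sphere (0 : ℂ) 1, 0 < ‖w - 1‖ → ‖w - 1‖ < 1 →
    ‖g w‖ ≤ B * (-Real.log ‖w - 1‖) ^ (-α) + B' * ‖w - 1‖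

lemma exists_nearOneBound_of_continuousOn_logWeighted {α : ℝ} {f : ℂ → ℂ}
    (hW : ContinuousOn (logWeighted α f) (sphere 0 1)) : ∃ B, 0 ≤ B ∧ NearOneBound α B 0 f := by
  obtain ⟨B, hB⟩ := (isCompact_sphere (0 : ℂ) 1).exists_bound_of_continuousOn hW
  refine ⟨B, by simpa [logWeighted] using hB 1 (by simp), fun w hw h0 h1 => ?_⟩
  simpa using norm_le_of_norm_logWeighted_le h0 h1 (hB w hw)

lemma NearOneBound.sub_trigPoly {α B B' : ℝ} {f : ℂ → ℂ} (hf : NearOneBound α B B' f)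
    (s : Finset ℤ) (c : ℤ → ℂ) :
    NearOneBound α B (B' + ∑ k ∈ s, ‖c k‖ * |(k : ℝ)|) fun w => f w - trigPoly s c w :=
  fun w hw h0 h1 => (norm_sub_le _ _).trans <| by
    rw [add_mul, ← add_assoc]
    exact add_le_add (hf w hw h0 h1) (norm_trigPoly_le s c (by simpa using hw))

lemma summable_and_tsum_le_of_fiberwise {G c : ℕ → ℝ} (ℓ : ℕ → ℕ) (hG : ∀ n, 0 ≤ G n)
    (hc : Summable c) (hfib : ∀ L (s : Finset ℕ), (∀ n ∈ s, ℓ n = L) → ∑ n ∈ s, G n ≤ c L) :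
    Summable G ∧ ∑' n, G n ≤ ∑' L, c L := by
  have key (u : Finset ℕ) : ∑ n ∈ u, G n ≤ ∑' L, c L := calc
    ∑ n ∈ u, G n = ∑ L ∈ u.image ℓ, ∑ n ∈ u with ℓ n = L, G n :=
      (Finset.sum_fiberwise_of_maps_to (fun n hn => Finset.mem_image_of_mem ℓ hn) G).symm
    _ ≤ ∑ L ∈ u.image ℓ, c L :=
      Finset.sum_le_sum fun L _ => hfib L _ fun n hn => (Finset.mem_filter.1 hn).2
    _ ≤ ∑' L, c L := hc.sum_le_tsum _ fun L _ => by simpa using hfib L ∅ (by simp)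
  exact ⟨summable_of_sum_le hG key, (summable_of_sum_le hG key).tsum_le_of_sum_le key⟩

lemma summable_and_tsum_le_of_layers_s8 {r G N b : ℕ → ℝ} {h : ℝ} (hh : 0 < h)
    (hN : ∀ (L : ℕ) (s : Finset ℕ), (∀ n ∈ s, Real.exp (-(L + 1) / h) ≤ r n) → (s.card : ℝ) ≤ N L)
    (hb : ∀ L, 0 ≤ b L) (hNb : Summable fun L => N L * b L)
    (hG0 : ∀ n, 0 ≤ G n) (hGr : ∀ n, G n ≠ 0 → 0 < r n) (hGb0 : ∀ n, G n ≤ b 0)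
    (hGb : ∀ n (L : ℕ), 0 < L → 0 < r n → r n ≤ Real.exp (-L / h) → G n ≤ b L) :
    Summable G ∧ ∑' n, G n ≤ ∑' L, N L * b L := by
  refine summable_and_tsum_le_of_fiberwise (fun n => ⌊-h * Real.log (r n)⌋₊) hG0 hNb
    fun L s hs => ?_
  have hlow : ∀ n ∈ s.filter (G · ≠ 0), Real.exp (-(L + 1) / h) ≤ r n := by
    intro n hn
    obtain ⟨hns, hGn⟩ := Finset.mem_filter.1 hn
    have hlt := Nat.lt_floor_add_one (-h * Real.log (r n))
    rw [hs n hns] at hlt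
    rw [← le_log_iff_exp_le (hGr n hGn), div_le_iff₀ hh]
    linarith
  have hup : ∀ n ∈ s.filter (G · ≠ 0), G n ≤ b L := by
    intro n hn
    obtain ⟨hns, hGn⟩ := Finset.mem_filter.1 hn
    rcases Nat.eq_zero_or_pos L with rfl | hL
    · exact hGb0 n
    refine hGb n L hL (hGr n hGn) ?_
    have hfl := hs n hns
    have hx : 1 ≤ -h * Real.log (r n) := Nat.floor_pos.1 (hfl ▸ hL)
    have hle : (L : ℝ) ≤ -h * Real.log (r n) := hfl ▸ Nat.floor_le (by linarith)
    rw [← log_le_iff_le_exp (hGr n hGn), le_div_iff₀ hh]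
    linarith
  calc ∑ n ∈ s, G n = ∑ n ∈ s with G n ≠ 0, G n := (Finset.sum_filter_ne_zero s).symm
    _ ≤ (s.filter (G · ≠ 0)).card • b L := Finset.sum_le_card_nsmul _ _ _ hup
    _ ≤ N L * b L := by
      rw [nsmul_eq_mul]
      exact mul_le_mul_of_nonneg_right (hN L _ hlow) (hb L)

lemma summable_add_one_pow_mul_rpow_neg {m : ℕ} {α : ℝ} (hα : m + 1 < α) :
    Summable fun L : ℕ => ((L : ℝ) + 1) ^ m * (L : ℝ) ^ (-α) := by
  refine ((Real.summable_nat_rpow.2 (by linarith : (m : ℝ) - α < -1)).mul_left (2 ^ m))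
    |>.of_nonneg_of_le (fun L => by positivity) fun L => ?_
  rcases Nat.eq_zero_or_pos L with rfl | hL
  · simp only [CharP.cast_eq_zero, Real.zero_rpow (by linarith : -α ≠ 0), mul_zero]
    positivity
  have hL1 : (1 : ℝ) ≤ L := by exact_mod_cast hL
  calc ((L : ℝ) + 1) ^ m * (L : ℝ) ^ (-α) ≤ (2 * L) ^ m * (L : ℝ) ^ (-α) := by
        gcongr; linarith
    _ = 2 ^ m * (L : ℝ) ^ ((m : ℝ) - α) := by
        rw [mul_pow, mul_assoc, sub_eq_add_neg, Real.rpow_add (by positivity), Real.rpow_natCast]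

lemma summable_add_one_pow_mul_exp_neg (m : ℕ) :
    Summable fun L : ℕ => ((L : ℝ) + 1) ^ m * Real.exp (-L) := by
  have := ((summable_nat_add_iff 1).2 (Real.summable_pow_mul_exp_neg_nat_mul m one_pos)).mul_left
    (Real.exp 1)
  refine this.congr fun L => ?_
  rw [mul_left_comm, ← Real.exp_add]
  push_cast
  ring_nf

/-- `B |log r|^(-α) + B' r` at `r = exp (-L / h)`; the outermost layer `L = 0` only gets the
uniform bound `M`. -/
noncomputable def layerBound (M B B' α h : ℝ) (L : ℕ) : ℝ :=
  if L = 0 then M else B * (L / h) ^ (-α) + B' * Real.exp (-L / h)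

section Layers

variable {m : ℕ} {M B B' α : ℝ}

lemma layerBound_nonneg (hM : 0 ≤ M) (hB : 0 ≤ B) (hB' : 0 ≤ B') {h : ℝ} (hh : 0 ≤ h) (L : ℕ) :
    0 ≤ layerBound M B B' α h L := by
  unfold layerBound
  split_ifs <;> positivity

lemma exists_layerBound_dominator (hα : m + 1 < α) (hB : 0 ≤ B) (hB' : 0 ≤ B') :
    ∃ bound : ℕ → ℝ, Summable bound ∧ ∀ h ∈ Set.Ioc (0 : ℝ) 1, ∀ L : ℕ,
      ‖((L : ℝ) + 1) ^ m * layerBound M B B' α h L‖ ≤ bound L := by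
  refine ⟨fun L => ((L : ℝ) + 1) ^ m * (B * (L : ℝ) ^ (-α) + B' * Real.exp (-L))
      + if L = 0 then |M| else 0,
    (((summable_add_one_pow_mul_rpow_neg hα).mul_left B).add
      ((summable_add_one_pow_mul_exp_neg m).mul_left B') |>.congr fun L => by ring).add
      (summable_of_ne_finset_zero (s := {0}) fun L hL => by simp_all),
    fun h ⟨hh0, hh1⟩ L => ?_⟩
  rcases Nat.eq_zero_or_pos L with rfl | hL
  · simpa [layerBound, Real.zero_rpow (by linarith : -α ≠ 0)] using hB'
  have hLh : (L : ℝ) ≤ L / h := le_div_self (by positivity) hh0 hh1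
  have hterm : B * (L / h) ^ (-α) + B' * Real.exp (-L / h)
      ≤ B * (L : ℝ) ^ (-α) + B' * Real.exp (-L) := by
    refine add_le_add (mul_le_mul_of_nonneg_left ?_ hB) (mul_le_mul_of_nonneg_left ?_ hB')
    · exact Real.rpow_le_rpow_of_nonpos (by exact_mod_cast hL) hLh (by linarith)
    · rw [neg_div, Real.exp_le_exp]
      exact neg_le_neg hLh
  simp only [layerBound, hL.ne', if_false, add_zero, Real.norm_eq_abs]
  rw [abs_of_nonneg (by positivity)]
  gcongr

lemma summable_layerBound (hα : m + 1 < α) (hB : 0 ≤ B) (hB' : 0 ≤ B') {h : ℝ}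
    (hh : h ∈ Set.Ioc (0 : ℝ) 1) :
    Summable fun L : ℕ => ((L : ℝ) + 1) ^ m * layerBound M B B' α h L := by
  obtain ⟨bound, hsum, hle⟩ := exists_layerBound_dominator (M := M) hα hB hB'
  exact hsum.of_norm_bounded (hle h hh)

lemma tendsto_tsum_layerBound (hα : m + 1 < α) (hB : 0 ≤ B) (hB' : 0 ≤ B') :
    Tendsto (fun h => ∑' L : ℕ, ((L : ℝ) + 1) ^ m * layerBound M B B' α h L) (𝓝[>] 0)
      (𝓝 M) := by
  obtain ⟨bound, hsum, hle⟩ := exists_layerBound_dominator (M := M) hα hB hB'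
  have hlim := tendsto_tsum_of_dominated_convergence (g := fun L : ℕ => if L = 0 then M else 0)
    (f := fun h (L : ℕ) => ((L : ℝ) + 1) ^ m * layerBound M B B' α h L) (𝓕 := 𝓝[>] 0) hsum
    (fun L => ?_) ?_
  · rwa [tsum_ite_eq 0 fun _ => M] at hlim
  · rcases Nat.eq_zero_or_pos L with rfl | hL
    · simp [layerBound]
    have hLh : Tendsto (fun h : ℝ => L / h) (𝓝[>] 0) atTop := by
      simpa [div_eq_mul_inv] using tendsto_inv_nhdsGT_zero.const_mul_atTop
        (by exact_mod_cast hL : (0 : ℝ) < L)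
    have := (((tendsto_rpow_neg_atTop (by linarith : 0 < α)).comp hLh).const_mul B).add
      ((Real.tendsto_exp_neg_atTop_nhds_zero.comp hLh).const_mul B')
      |>.const_mul (((L : ℝ) + 1) ^ m)
    simpa [layerBound, hL.ne', neg_div] using this
  · filter_upwards [Ioc_mem_nhdsGT one_pos] with h hh using hle h hh

lemma near_le_layerBound (hα : 0 ≤ α) (hB : 0 ≤ B) (hB' : 0 ≤ B') {h r : ℝ} (hh : 0 < h)
    {L : ℕ} (hL : 0 < L) (hr : 0 < r) (hrL : r ≤ Real.exp (-L / h)) :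
    B * (-Real.log r) ^ (-α) + B' * r ≤ layerBound M B B' α h L := by
  have hlog : (L : ℝ) / h ≤ -Real.log r := by
    rw [le_neg, ← neg_div, Real.log_le_iff_le_exp hr]
    exact hrL
  rw [layerBound, if_neg hL.ne']
  exact add_le_add (mul_le_mul_of_nonneg_left (Real.rpow_le_rpow_of_nonpos
    (div_pos (by exact_mod_cast hL) hh) hlog (by linarith)) hB)
    (mul_le_mul_of_nonneg_left hrL hB')

end Layers

/-- Hypothesis (i): the eigenvalue counting bound. -/
def CountingBound (d : ℕ) (C₀ : ℝ) (z : ℝ → ℕ → ℂ) : Prop :=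
  ∀ L : ℝ, 1 ≤ L → ∀ h ∈ Set.Ioo (0 : ℝ) 1,
    {n : ℕ | 1 ≤ n ∧ Real.exp (-L / h) ≤ ‖z h n - 1‖}.Finite ∧
      (({n : ℕ | 1 ≤ n ∧ Real.exp (-L / h) ≤ ‖z h n - 1‖}.ncard : ℝ) ≤ C₀ * (L / h) ^ (d - 1))

/-- Hypothesis (ii): the trace asymptotics. -/
def TraceAsymptotics (d : ℕ) (V : ℝ) (z : ℝ → ℕ → ℂ) : Prop :=
  ∀ k : ℤ, k ≠ 0 →
    (∀ h ∈ Set.Ioo (0 : ℝ) 1, Summable (fun n : ℕ => ‖z h (n + 1) ^ k - 1‖)) ∧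
      Tendsto (fun h : ℝ => (Complex.ofReal ((2 * π * h) ^ (d - 1))) *
          ∑' n : ℕ, (z h (n + 1) ^ k - 1)) (𝓝[>] 0) (𝓝 (-(V : ℂ)))

lemma dist_ofReal_mul_tsum_le {u v : ℕ → ℂ} (hu : Summable u) (hv : Summable v)
    (huv : Summable fun n => ‖u n - v n‖) {X : ℝ} (hX : 0 ≤ X) :
    dist ((X : ℂ) * ∑' n, u n) (X * ∑' n, v n) ≤ X * ∑' n, ‖u n - v n‖ := by
  rw [dist_eq_norm, ← mul_sub, ← hu.tsum_sub hv, norm_mul, norm_real, Real.norm_of_nonneg hX]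
  exact mul_le_mul_of_nonneg_left (norm_tsum_le_tsum_norm huv) hX

section Sequence

variable {d : ℕ} {α C₀ V : ℝ} {z : ℝ → ℕ → ℂ}

lemma CountingBound.card_le (hcount : CountingBound d C₀ z) {h : ℝ} (hh : h ∈ Set.Ioo (0 : ℝ) 1)
    (L : ℕ) (s : Finset ℕ) (hs : ∀ n ∈ s, Real.exp (-(L + 1) / h) ≤ ‖z h (n + 1) - 1‖) :
    (s.card : ℝ) ≤ C₀ * ((L + 1) / h) ^ (d - 1) := by
  obtain ⟨hfin, hcard⟩ := hcount (L + 1) (by linarith [(L.cast_nonneg : (0 : ℝ) ≤ L)]) h hh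
  refine le_trans ?_ hcard
  rw [← Finset.card_image_of_injective s (add_left_injective 1), ← Set.ncard_coe_finset]
  refine Nat.cast_le.2 (Set.ncard_le_ncard (fun m hm => ?_) hfin)
  obtain ⟨n, hn, rfl⟩ := Finset.mem_image.1 hm
  exact ⟨by omega, by exact_mod_cast hs n hn⟩

lemma summable_and_tsum_le_layerBound (hd : 1 ≤ d) (hα : (d : ℝ) < α)
    (hmod : ∀ h ∈ Set.Ioo (0 : ℝ) 1, ∀ n : ℕ, 1 ≤ n → ‖z h n‖ = 1)
    (hcount : CountingBound d C₀ z) {g : ℂ → ℂ} {M B B' : ℝ} (hB : 0 ≤ B) (hB' : 0 ≤ B')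
    (hgM : ∀ w ∈ sphere (0 : ℂ) 1, ‖g w‖ ≤ M) (hg1 : g 1 = 0) (hgnear : NearOneBound α B B' g)
    {h : ℝ} (hh : h ∈ Set.Ioo (0 : ℝ) 1) :
    Summable (fun n => ‖g (z h (n + 1))‖) ∧ ∑' n, ‖g (z h (n + 1))‖ ≤
      C₀ * (1 / h) ^ (d - 1) * ∑' L : ℕ, ((L : ℝ) + 1) ^ (d - 1) * layerBound M B B' α h L := by
  have hα' : ((d - 1 : ℕ) : ℝ) + 1 < α := by rw [Nat.cast_sub hd, Nat.cast_one]; linarith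
  have hM : 0 ≤ M := (norm_nonneg _).trans (hgM 1 (by simp))
  have hsph (n : ℕ) : z h (n + 1) ∈ sphere (0 : ℂ) 1 := by
    simpa using hmod h hh (n + 1) (by omega)
  have hNb (L : ℕ) : C₀ * (((L : ℝ) + 1) / h) ^ (d - 1) * layerBound M B B' α h L
      = C₀ * (1 / h) ^ (d - 1) * (((L : ℝ) + 1) ^ (d - 1) * layerBound M B B' α h L) := by
    rw [div_eq_mul_one_div _ h, mul_pow]; ring
  obtain ⟨hsum, hle⟩ := summable_and_tsum_le_of_layers_s8 (r := fun n => ‖z h (n + 1) - 1‖)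
    (G := fun n => ‖g (z h (n + 1))‖) hh.1 (hcount.card_le hh)
    (layerBound_nonneg hM hB hB' hh.1.le)
    (((summable_layerBound hα' hB hB' ⟨hh.1, hh.2.le⟩).mul_left _).congr fun L => (hNb L).symm)
    (fun n => norm_nonneg _)
    (fun n hn => norm_pos_iff.2 (sub_ne_zero.2 fun h1 => hn (by simp [h1, hg1])))
    (fun n => by simpa [layerBound] using hgM _ (hsph n))
    (fun n L hL hr hrL => (hgnear _ (hsph n) hr (hrL.trans_lt (Real.exp_lt_one_iff.2
      (div_neg_of_neg_of_pos (by simpa using hL) hh.1)))).trans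
      (near_le_layerBound (by linarith) hB hB' hh.1 hL hr hrL))
  refine ⟨hsum, hle.trans_eq ?_⟩
  rw [← tsum_mul_left]
  exact tsum_congr hNb

lemma eventually_mul_tsum_le (hd : 1 ≤ d) (hα : (d : ℝ) < α)
    (hmod : ∀ h ∈ Set.Ioo (0 : ℝ) 1, ∀ n : ℕ, 1 ≤ n → ‖z h n‖ = 1)
    (hcount : CountingBound d C₀ z) {g : ℂ → ℂ} {M B B' : ℝ} (hB : 0 ≤ B) (hB' : 0 ≤ B')
    (hgM : ∀ w ∈ sphere (0 : ℂ) 1, ‖g w‖ ≤ M) (hg1 : g 1 = 0) (hgnear : NearOneBound α B B' g)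
    {δ : ℝ} (hδ : 0 < δ) :
    ∀ᶠ h in 𝓝[>] 0, Summable (fun n => ‖g (z h (n + 1))‖) ∧
      (2 * π * h) ^ (d - 1) * ∑' n, ‖g (z h (n + 1))‖ ≤ (2 * π) ^ (d - 1) * C₀ * M + δ := by
  have hα' : ((d - 1 : ℕ) : ℝ) + 1 < α := by rw [Nat.cast_sub hd, Nat.cast_one]; linarith
  have hlim := (tendsto_tsum_layerBound (M := M) hα' hB hB').const_mul ((2 * π) ^ (d - 1) * C₀)
  filter_upwards [Ioo_mem_nhdsGT one_pos, hlim.eventually_lt_const (lt_add_of_pos_right _ hδ)]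
    with h hh hS
  obtain ⟨hsum, hle⟩ := summable_and_tsum_le_layerBound hd hα hmod hcount hB hB' hgM hg1 hgnear hh
  have hscale : (2 * π * h) ^ (d - 1) * (1 / h) ^ (d - 1) = (2 * π) ^ (d - 1) := by
    rw [← mul_pow]; congr 1; field_simp [hh.1.ne']
  refine ⟨hsum, ?_⟩
  calc (2 * π * h) ^ (d - 1) * ∑' n, ‖g (z h (n + 1))‖
      ≤ (2 * π * h) ^ (d - 1) * (C₀ * (1 / h) ^ (d - 1) *
        ∑' L : ℕ, ((L : ℝ) + 1) ^ (d - 1) * layerBound M B B' α h L) :=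
        mul_le_mul_of_nonneg_left hle (by have := hh.1; positivity)
    _ = (2 * π) ^ (d - 1) * C₀ *
        ∑' L : ℕ, ((L : ℝ) + 1) ^ (d - 1) * layerBound M B B' α h L := by
        rw [← hscale]; ring
    _ ≤ _ := hS.le

lemma TraceAsymptotics.summable_trigPoly (htrace : TraceAsymptotics d V z) {s : Finset ℤ}
    (hs : 0 ∉ s) (c : ℤ → ℂ) {h : ℝ} (hh : h ∈ Set.Ioo (0 : ℝ) 1) :
    Summable fun n => trigPoly s c (z h (n + 1)) :=
  summable_sum fun k hk =>
    ((htrace k (ne_of_mem_of_not_mem hk hs)).1 h hh).of_norm.mul_left (c k)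

lemma TraceAsymptotics.tendsto_trigPoly (htrace : TraceAsymptotics d V z) {s : Finset ℤ}
    (hs : 0 ∉ s) (c : ℤ → ℂ) :
    Tendsto (fun h : ℝ => (Complex.ofReal ((2 * π * h) ^ (d - 1))) *
        ∑' n : ℕ, trigPoly s c (z h (n + 1))) (𝓝[>] 0) (𝓝 (-(V : ℂ) * ∑ k ∈ s, c k)) := by
  have hk : ∀ k ∈ s, k ≠ 0 := fun k hk => ne_of_mem_of_not_mem hk hs
  have heq : ∀ h ∈ Set.Ioo (0 : ℝ) 1,
      ∑ k ∈ s, c k * ((Complex.ofReal ((2 * π * h) ^ (d - 1))) * ∑' n : ℕ, (z h (n + 1) ^ k - 1))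
        = (Complex.ofReal ((2 * π * h) ^ (d - 1))) * ∑' n : ℕ, trigPoly s c (z h (n + 1)) := by
    intro h hh
    simp only [trigPoly]
    rw [Summable.tsum_finsetSum fun k hk' => ((htrace k (hk k hk')).1 h hh).of_norm.mul_left (c k),
      Finset.mul_sum]
    refine Finset.sum_congr rfl fun k _ => ?_
    rw [tsum_mul_left]
    ring
  rw [Finset.mul_sum]
  simp_rw [mul_comm (-(V : ℂ))]
  exact (tendsto_finsetSum s fun k hk' => ((htrace k (hk k hk')).2.const_mul (c k))).congr'
    (eventuallyEq_of_mem (Ioo_mem_nhdsGT one_pos) heq)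

end Sequence

theorem stmt_8_general (d : ℕ) (hd : 2 ≤ d) (α : ℝ) (hα : (d : ℝ) < α) (V : ℝ)
    (C₀ : ℝ) (z : ℝ → ℕ → ℂ)
    (hmod : ∀ h ∈ Set.Ioo (0 : ℝ) 1, ∀ n : ℕ, 1 ≤ n → ‖z h n‖ = 1)
    (hcount : ∀ L : ℝ, 1 ≤ L → ∀ h ∈ Set.Ioo (0 : ℝ) 1,
      {n : ℕ | 1 ≤ n ∧ Real.exp (-L / h) ≤ ‖z h n - 1‖}.Finite ∧
        (({n : ℕ | 1 ≤ n ∧ Real.exp (-L / h) ≤ ‖z h n - 1‖}.ncard : ℝ) ≤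
          C₀ * (L / h) ^ (d - 1)))
    (htrace : ∀ k : ℤ, k ≠ 0 →
      (∀ h ∈ Set.Ioo (0 : ℝ) 1, Summable (fun n : ℕ => ‖z h (n + 1) ^ k - 1‖)) ∧
        Filter.Tendsto
          (fun h : ℝ => (Complex.ofReal ((2 * π * h) ^ (d - 1))) *
            ∑' n : ℕ, (z h (n + 1) ^ k - 1))
          (nhdsWithin 0 (Set.Ioi 0)) (nhds (-(V : ℂ)))) :
    ∀ f : ℂ → ℂ, ContinuousOn f (Metric.sphere (0 : ℂ) 1) →
      ContinuousOn
        (fun w : ℂ => if w = 1 then (0 : ℂ)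
          else f w * Complex.ofReal (|Real.log (‖w - 1‖)| ^ α))
        (Metric.sphere (0 : ℂ) 1) →
      (∀ h ∈ Set.Ioo (0 : ℝ) 1, Summable (fun n : ℕ => ‖f (z h (n + 1))‖)) ∧
        Filter.Tendsto
          (fun h : ℝ => (Complex.ofReal ((2 * π * h) ^ (d - 1))) *
            ∑' n : ℕ, f (z h (n + 1)))
          (nhdsWithin 0 (Set.Ioi 0))
          (nhds ((Complex.ofReal (V / (2 * π))) *
            ∫ θ in (0 : ℝ)..(2 * π), f (Complex.exp (θ * Complex.I)))) := by
  intro f hf hW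
  have hd1 : 1 ≤ d := by omega
  have hα0 : 0 < α := lt_of_le_of_lt d.cast_nonneg hα
  have hf1 := eq_zero_at_one_of_continuousOn_logWeighted hα0 hf hW
  obtain ⟨B, hB, hfnear⟩ := exists_nearOneBound_of_continuousOn_logWeighted hW
  obtain ⟨Mf, hMf⟩ := (isCompact_sphere (0 : ℂ) 1).exists_bound_of_continuousOn hf
  have hfsum : ∀ h ∈ Set.Ioo (0 : ℝ) 1, Summable fun n => ‖f (z h (n + 1))‖ := fun h hh =>
    (summable_and_tsum_le_layerBound hd1 hα hmod hcount hB le_rfl hMf hf1 hfnear hh).1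
  -- `(2π)^{d-1} C₀ ε + ε` is lost on the sums, `|V| ε` on the integral
  refine ⟨hfsum, tendsto_of_forall_approx ((2 * π) ^ (d - 1) * C₀ + 1 + |V|) fun ε hε => ?_⟩
  obtain ⟨s, hs, c, hfp⟩ := exists_trigPoly_approx hf hf1 hε
  refine ⟨_, _, TraceAsymptotics.tendsto_trigPoly htrace hs c, ?_⟩
  filter_upwards [eventually_mul_tsum_le hd1 hα hmod hcount hB (by positivity) hfp
    (by simp [hf1, trigPoly]) (hfnear.sub_trigPoly s c) hε, Ioo_mem_nhdsGT one_pos]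
    with h ⟨hsum, hle⟩ hh
  have hdist := dist_ofReal_mul_tsum_le (hfsum h hh).of_norm
    (TraceAsymptotics.summable_trigPoly htrace hs c hh) hsum
    (X := (2 * π * h) ^ (d - 1)) (by have := hh.1; positivity)
  linarith [dist_integral_trigPoly_le hf hs c hfp V]

/-- Theorem 3 of the paper (analytic content): the eigenvalue counting bound together
with the trace asymptotics `(2πh)^{d-1} Σ (z_{h,n}^k - 1) → -V` for every `k ≠ 0`
imply equidistribution `(2πh)^{d-1} Σ f(z_{h,n}) → (V/2π) ∫₀^{2π} f(e^{iθ}) dθ`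
for every `f` in the weighted space `C⁰_α(S¹)`, `α > d`. -/
theorem stmt_8 (d : ℕ) (hd : 2 ≤ d) (α : ℝ) (hα : (d : ℝ) < α) (V : ℝ)
    (C₀ : ℝ) (hC₀ : 0 < C₀) (z : ℝ → ℕ → ℂ)
    (hmod : ∀ h ∈ Set.Ioo (0 : ℝ) 1, ∀ n : ℕ, 1 ≤ n → ‖z h n‖ = 1)
    (hcount : ∀ L : ℝ, 1 ≤ L → ∀ h ∈ Set.Ioo (0 : ℝ) 1,
      {n : ℕ | 1 ≤ n ∧ Real.exp (-L / h) ≤ ‖z h n - 1‖}.Finite ∧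
        (({n : ℕ | 1 ≤ n ∧ Real.exp (-L / h) ≤ ‖z h n - 1‖}.ncard : ℝ) ≤
          C₀ * (L / h) ^ (d - 1)))
    (htrace : ∀ k : ℤ, k ≠ 0 →
      (∀ h ∈ Set.Ioo (0 : ℝ) 1, Summable (fun n : ℕ => ‖z h (n + 1) ^ k - 1‖)) ∧
        Filter.Tendsto
          (fun h : ℝ => (Complex.ofReal ((2 * π * h) ^ (d - 1))) *
            ∑' n : ℕ, (z h (n + 1) ^ k - 1))
          (nhdsWithin 0 (Set.Ioi 0)) (nhds (-(V : ℂ)))) :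
    ∀ f : ℂ → ℂ, ContinuousOn f (Metric.sphere (0 : ℂ) 1) →
      ContinuousOn
        (fun w : ℂ => if w = 1 then (0 : ℂ)
          else f w * Complex.ofReal (|Real.log (‖w - 1‖)| ^ α))
        (Metric.sphere (0 : ℂ) 1) →
      (∀ h ∈ Set.Ioo (0 : ℝ) 1, Summable (fun n : ℕ => ‖f (z h (n + 1))‖)) ∧
        Filter.Tendsto
          (fun h : ℝ => (Complex.ofReal ((2 * π * h) ^ (d - 1))) *
            ∑' n : ℕ, f (z h (n + 1)))
          (nhdsWithin 0 (Set.Ioi 0))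
          (nhds ((Complex.ofReal (V / (2 * π))) *
            ∫ θ in (0 : ℝ)..(2 * π), f (Complex.exp (θ * Complex.I)))) :=
  stmt_8_general d hd α hα V C₀ z hmod hcount htrace
end
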